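/- arXiv:2603.09734 — 3 statements merged into one kernel-verified Lean document; each statement's English description precedes it below -/
import Mathlib

section
/- The Rockafellar–Uryasev representation: for a real integrable random variable X with continuous CDF and φ ∈ (0,1), CVaR_φ[X] = VaR_φ[X] + (1−φ)⁻¹ · E[(X − VaR_φ[X])⁺], where CVaR_φ[X] := E[X | X ≥ VaR_φ[X]]. -/
open MeasureTheory ProbabilityTheory Filter Set Topology

/-! The quantile `v = VaR_φ[X]` of a continuous distribution is hit exactly, `F v = φ`, and carries
no atom, so `P(X ≥ v) = 1 - φ`. The identity is then the pointwise decomposition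
`X 𝟙{X ≥ v} = v 𝟙{X ≥ v} + (X - v)⁺` integrated and divided by `1 - φ`. -/

section Quantile

variable {α : Type*} [ConditionallyCompleteLinearOrder α] [TopologicalSpace α] [OrderTopology α]
  [DenselyOrdered α] [NoMinOrder α]

/-- The set `{x | φ ≤ F x}` is closed, so it contains its infimum `v`, while `F < φ` on `Iio v`. -/
theorem Continuous.apply_csInf_setOf_le_eq {F : α → ℝ} (hF : Continuous F) {φ : ℝ}
    (hne : {x | φ ≤ F x}.Nonempty) (hbdd : BddBelow {x | φ ≤ F x}) :
    F (sInf {x | φ ≤ F x}) = φ := by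
  set v := sInf {x | φ ≤ F x}
  have hle : φ ≤ F v := (isClosed_le continuous_const hF).csInf_mem hne hbdd
  refine le_antisymm
    (le_of_tendsto ((hF.tendsto v).mono_left (nhdsWithin_le_nhds (s := Iio v))) ?_) hle
  filter_upwards [self_mem_nhdsWithin] with x (hx : x < v)
  exact le_of_lt (not_le.1 fun h => hx.not_ge (csInf_le hbdd h))

end Quantile

theorem cdf_csInf_setOf_le_cdf_eq (μ : Measure ℝ) [IsProbabilityMeasure μ]
    (hc : Continuous (cdf μ)) {φ : ℝ} (hφ : φ ∈ Ioo (0 : ℝ) 1) :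
    cdf μ (sInf {x | φ ≤ cdf μ x}) = φ := by
  refine hc.apply_csInf_setOf_le_eq
    ((tendsto_cdf_atTop (μ := μ)).eventually_const_le hφ.2).exists ?_
  obtain ⟨x₀, hx₀⟩ := eventually_atBot.1 ((tendsto_cdf_atBot (μ := μ)).eventually_lt_const hφ.1)
  exact ⟨x₀, fun y hy => le_of_not_ge fun hlt => (hx₀ y hlt).not_ge hy⟩

theorem measure_singleton_eq_zero_of_continuousAt_cdf (μ : Measure ℝ) [IsProbabilityMeasure μ]
    {x : ℝ} (hx : ContinuousAt (cdf μ) x) : μ {x} = 0 := by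
  have hlim : Function.leftLim (cdf μ) x = cdf μ x :=
    leftLim_eq_of_tendsto (h := nhdsLT_neBot x) (hx.tendsto.mono_left nhdsWithin_le_nhds)
  rw [← measure_cdf μ, StieltjesFunction.measure_singleton, hlim, sub_self, ENNReal.ofReal_zero]

theorem measureReal_Ici_eq_one_sub_cdf (μ : Measure ℝ) [IsProbabilityMeasure μ] {x : ℝ}
    (hx : ContinuousAt (cdf μ) x) : μ.real (Ici x) = 1 - cdf μ x := by
  rw [← measureReal_congr (Ioi_ae_eq_Ici' (measure_singleton_eq_zero_of_continuousAt_cdf μ hx)),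
    ← compl_Iic, probReal_compl_eq_one_sub measurableSet_Iic, cdf_eq_real]

section Integrals

variable {Ω : Type*} [MeasurableSpace Ω] {P : Measure Ω} {X : Ω → ℝ}

theorem integral_mul_indicator_one {s : Set Ω} (hs : MeasurableSet s) :
    ∫ ω, X ω * s.indicator (fun _ => (1 : ℝ)) ω ∂P = ∫ ω in s, X ω ∂P := by
  simp_rw [← indicator_mul_right, mul_one]
  exact integral_indicator hs

theorem integral_max_sub_const_zero [IsFiniteMeasure P] (hX : Measurable X) (hint : Integrable X P)
    (v : ℝ) :
    ∫ ω, max (X ω - v) 0 ∂P = ∫ ω in {ω | v ≤ X ω}, X ω ∂P - v * P.real {ω | v ≤ X ω} := by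
  have hs : MeasurableSet {ω | v ≤ X ω} := measurableSet_le measurable_const hX
  have hpos : (fun ω => max (X ω - v) 0) = {ω | v ≤ X ω}.indicator (fun ω => X ω - v) := by
    ext ω
    by_cases h : v ≤ X ω
    · simp [h]
    · simp [h, (not_le.1 h).le]
  rw [hpos, integral_indicator hs, integral_sub hint.integrableOn (integrable_const v).integrableOn,
    setIntegral_const, smul_eq_mul, mul_comm]

end Integrals

/-- Rockafellar–Uryasev representation: for an integrable real random variable X
with continuous CDF F and φ ∈ (0,1),
`CVaR_φ[X] = E[X·𝟙{X ≥ VaR}]/(1−φ) = VaR + (1−φ)⁻¹ E[(X − VaR)⁺]`,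
where `VaR = sInf {x : F x ≥ φ}`. -/
theorem cvar_rockafellar_uryasev
    {Ω : Type*} [MeasurableSpace Ω] (P : Measure Ω) [IsProbabilityMeasure P]
    (X : Ω → ℝ) (hX : Measurable X) (hint : Integrable X P)
    (F : ℝ → ℝ) (hF : ∀ x, F x = (P {ω | X ω ≤ x}).toReal)
    (hcont : Continuous F)
    (φ : ℝ) (hφ : φ ∈ Set.Ioo (0 : ℝ) 1) :
    (∫ ω, X ω * ({ω' : Ω | sInf {x : ℝ | φ ≤ F x} ≤ X ω'}).indicator
        (fun _ => (1 : ℝ)) ω ∂P) / (1 - φ)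
      = sInf {x : ℝ | φ ≤ F x}
        + (1 - φ)⁻¹ * ∫ ω, max (X ω - sInf {x : ℝ | φ ≤ F x}) 0 ∂P := by
  have := Measure.isProbabilityMeasure_map (μ := P) hX.aemeasurable
  have hF_cdf : F = cdf (P.map X) := funext fun x => by
    rw [hF, cdf_eq_real, map_measureReal_apply hX measurableSet_Iic]; rfl
  subst hF_cdf
  set v := sInf {x | φ ≤ cdf (P.map X) x}
  have hv : cdf (P.map X) v = φ := cdf_csInf_setOf_le_cdf_eq _ hcont hφ
  have htail : P.real {ω | v ≤ X ω} = 1 - φ := by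
    rw [← hv, ← measureReal_Ici_eq_one_sub_cdf _ hcont.continuousAt,
      map_measureReal_apply hX measurableSet_Ici]
    rfl
  have hφ1 : 1 - φ ≠ 0 := sub_ne_zero.2 hφ.2.ne'
  rw [integral_mul_indicator_one (measurableSet_le measurable_const hX),
    integral_max_sub_const_zero hX hint, htail]
  field_simp
  ring
end

section
/- The function v ↦ v + (1−φ)⁻¹ E[(X − v)⁺] is convex on ℝ and is minimized at v = VaR_φ[X], with minimum value equal to CVaR_φ[X], for any integrable real random variable X with continuous CDF and φ ∈ (0,1). -/
/-!
Convexity is inherited under the integral from the convexity of `v ↦ (x - v)⁺`.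
For minimality, the pointwise inequality `(x - q)⁺ - (w - q) 𝟙{x > q} ≤ (x - w)⁺` says
that `-P(X > q)` is a subgradient of `v ↦ E[(X - v)⁺]` at `q`, so `q` minimises
`v ↦ v + c⁻¹ E[(X - v)⁺]` whenever `c = P(X > q) > 0`. At `q = VaR_φ[X]` continuity
of `F` forces `F q = φ`, i.e. `P(X > q) = 1 - φ`.
-/

open MeasureTheory Filter Topology Set ProbabilityTheory

lemma convexOn_posPart_sub (x : ℝ) : ConvexOn ℝ univ (fun v : ℝ => max (x - v) 0) :=
  ((convexOn_const x convex_univ).sub (concaveOn_id convex_univ)).sup (convexOn_const 0 convex_univ)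

lemma posPart_sub_sub_indicator_le (x q w : ℝ) :
    max (x - q) 0 - (Ioi q).indicator (fun _ => w - q) x ≤ max (x - w) 0 := by
  by_cases hx : q < x
  · simp only [indicator_of_mem (show x ∈ Ioi q from hx)]
    grind
  · simp only [indicator_of_notMem (show x ∉ Ioi q from hx)]
    grind

theorem Continuous.apply_csInf_setOf_le {F : ℝ → ℝ} (hF : Continuous F) {φ : ℝ}
    (hbot : ∀ᶠ x in atBot, F x < φ) (htop : ∃ x, φ ≤ F x) :
    F (sInf {x | φ ≤ F x}) = φ := by
  set S := {x | φ ≤ F x}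
  have hbdd : BddBelow S := by
    obtain ⟨a, ha⟩ := eventually_atBot.mp hbot
    exact ⟨a, fun x hx => le_of_not_ge fun hxa => (ha x hxa).not_ge hx⟩
  have hmem : sInf S ∈ S := (isClosed_le continuous_const hF).csInf_mem htop hbdd
  refine le_antisymm ?_ hmem
  -- every point left of the infimum lies outside `S`
  refine le_of_tendsto (hF.continuousWithinAt (s := Iio (sInf S))).tendsto ?_
  filter_upwards [self_mem_nhdsWithin] with x hx
  exact (not_le.mp (notMem_of_lt_csInf (s := S) hx hbdd)).le

section

variable {Ω : Type*} [MeasurableSpace Ω] {μ : Measure Ω} [IsFiniteMeasure μ] {X : Ω → ℝ}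

lemma integrable_posPart_sub (hX : Integrable X μ) (v : ℝ) :
    Integrable (fun ω => max (X ω - v) 0) μ :=
  (hX.sub (integrable_const v)).pos_part

lemma convexOn_integral_posPart_sub (hX : Integrable X μ) :
    ConvexOn ℝ univ (fun v => ∫ ω, max (X ω - v) 0 ∂μ) :=
  integral_convexOn_of_integrand_ae convex_univ
    (.of_forall fun ω => convexOn_posPart_sub (X ω)) fun v _ => integrable_posPart_sub hX v

lemma integral_posPart_sub_sub_le (hXm : Measurable X) (hX : Integrable X μ) (q w : ℝ) :
    ∫ ω, max (X ω - q) 0 ∂μ - (w - q) * μ.real {ω | q < X ω}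
      ≤ ∫ ω, max (X ω - w) 0 ∂μ := by
  have hs : MeasurableSet {ω | q < X ω} := hXm measurableSet_Ioi
  have hind : Integrable ({ω | q < X ω}.indicator fun _ => w - q) μ :=
    (integrable_const _).indicator hs
  calc ∫ ω, max (X ω - q) 0 ∂μ - (w - q) * μ.real {ω | q < X ω}
      = ∫ ω, (max (X ω - q) 0 - {ω | q < X ω}.indicator (fun _ => w - q) ω) ∂μ := by
        rw [integral_sub (integrable_posPart_sub hX q) hind, integral_indicator_const _ hs,
          smul_eq_mul, mul_comm]
    _ ≤ ∫ ω, max (X ω - w) 0 ∂μ :=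
        integral_mono ((integrable_posPart_sub hX q).sub hind) (integrable_posPart_sub hX w)
          fun ω => posPart_sub_sub_indicator_le (X ω) q w

lemma add_inv_mul_integral_posPart_sub_le (hXm : Measurable X) (hX : Integrable X μ) {q : ℝ}
    (hq : 0 < μ.real {ω | q < X ω}) (w : ℝ) :
    q + (μ.real {ω | q < X ω})⁻¹ * ∫ ω, max (X ω - q) 0 ∂μ
      ≤ w + (μ.real {ω | q < X ω})⁻¹ * ∫ ω, max (X ω - w) 0 ∂μ := by
  have := mul_le_mul_of_nonneg_left (integral_posPart_sub_sub_le hXm hX q w) (inv_pos.mpr hq).le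
  rw [mul_sub, mul_left_comm, inv_mul_cancel₀ hq.ne', mul_one] at this
  linarith

end

lemma cdf_map_eq {Ω : Type*} [MeasurableSpace Ω] {P : Measure Ω} [IsProbabilityMeasure P]
    {X : Ω → ℝ} (hX : Measurable X) (x : ℝ) :
    cdf (P.map X) x = P.real {ω | X ω ≤ x} := by
  have := Measure.isProbabilityMeasure_map (μ := P) hX.aemeasurable
  rw [cdf_eq_real, map_measureReal_apply hX measurableSet_Iic]
  rfl

/-- the function `g v = v + (1−φ)⁻¹ E[(X − v)⁺]` is convex on ℝ and is
minimized at `v = VaR_φ[X]`, with minimum value `CVaR_φ[X]`, for any integrable real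
random variable X with continuous CDF and φ ∈ (0,1). -/
theorem cvar_variational
    {Ω : Type*} [MeasurableSpace Ω] (P : Measure Ω) [IsProbabilityMeasure P]
    (X : Ω → ℝ) (hX : Measurable X) (hint : Integrable X P)
    (F : ℝ → ℝ) (hF : ∀ x, F x = (P {ω | X ω ≤ x}).toReal)
    (hcont : Continuous F)
    (φ : ℝ) (hφ : φ ∈ Set.Ioo (0 : ℝ) 1)
    (g : ℝ → ℝ) (hg : ∀ v, g v = v + (1 - φ)⁻¹ * ∫ ω, max (X ω - v) 0 ∂P) :
    ConvexOn ℝ Set.univ g ∧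
    (∀ w : ℝ, g (sInf {x : ℝ | φ ≤ F x}) ≤ g w) ∧
    g (sInf {x : ℝ | φ ≤ F x})
      = sInf {x : ℝ | φ ≤ F x}
        + (1 - φ)⁻¹ * ∫ ω, max (X ω - sInf {x : ℝ | φ ≤ F x}) 0 ∂P := by
  obtain ⟨hφ0, hφ1⟩ := hφ
  have hFcdf : F = cdf (P.map X) := funext fun x => by rw [hF, cdf_map_eq hX]; rfl
  set q := sInf {x : ℝ | φ ≤ F x}
  have hFq : F q = φ := by
    refine hcont.apply_csInf_setOf_le ?_ ?_
    · rw [hFcdf]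
      exact (tendsto_cdf_atBot _).eventually (eventually_lt_nhds hφ0)
    · rw [hFcdf]
      exact ((tendsto_cdf_atTop _).eventually (eventually_ge_nhds hφ1)).exists
  have htail : P.real {ω | q < X ω} = 1 - φ := by
    have hcompl : {ω | q < X ω} = {ω | X ω ≤ q}ᶜ := by ext; simp
    rw [hcompl, probReal_compl_eq_one_sub (s := {ω | X ω ≤ q}) (hX measurableSet_Iic),
      measureReal_def, ← hF, hFq]
  refine ⟨?_, fun w => ?_, hg q⟩
  · rw [show g = fun v => v + (1 - φ)⁻¹ * ∫ ω, max (X ω - v) 0 ∂P from funext hg]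
    exact (convexOn_id convex_univ).add
      ((convexOn_integral_posPart_sub hint).smul (inv_nonneg.mpr (by linarith)))
  · rw [hg, hg, ← htail]
    exact add_inv_mul_integral_posPart_sub_le hX hint (by linarith) w
end

section
/- Span semi-norm contraction of the Bellman-type operator: for bounded functions Q, Q' : S × A → ℝ on finite sets S, A, define (TQ)(s,a) := c(s,a) + ∑_{s'} p(s'|s,a) min_{a'} Q(s',a'), where p(·|s,a) are probability vectors with p(s'|s,a) ≥ ρ > 0 for all s,s',a. Then ‖TQ − TQ'‖_sp ≤ (1 − ρ)·‖min_{a'}Q(·,a') − min_{a'}Q'(·,a')‖_sp ≤ (1−ρ)‖Q − Q'‖_sp, where ‖g‖_sp := max g − min g is the span semi-norm. -/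
/-- Span semi-norm of a real-valued function on a finite nonempty type. -/
noncomputable def spanSN {Z : Type*} [Fintype Z] [Nonempty Z] (g : Z → ℝ) : ℝ :=
  (⨆ z, g z) - ⨅ z, g z

/-- The Bellman-type operator `(TQ)(s,a) = c(s,a) + ∑_{s'} p(s'|s,a) min_{a'} Q(s',a')`. -/
noncomputable def bellmanT {S A : Type*} [Fintype S] [Fintype A] [Nonempty A]
    (c : S → A → ℝ) (p : S → A → S → ℝ) (Q : S → A → ℝ) : S → A → ℝ :=
  fun s a => c s a + ∑ s', p s a s' * ⨅ a', Q s' a'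

private lemma inf_attained {Z : Type*} [Fintype Z] [Nonempty Z] (f : Z → ℝ) :
    ∃ z, f z = ⨅ w, f w := by
  obtain ⟨z, hz⟩ := Finite.exists_min f
  exact ⟨z, le_antisymm (le_ciInf hz) (ciInf_le (Finite.bddBelow_range f) z)⟩

/-- Span semi-norm contraction of the Bellman operator under the Doeblin
condition p(s'|s,a) ≥ ρ > 0:
`‖TQ − TQ'‖_sp ≤ (1−ρ) ‖min Q − min Q'‖_sp ≤ (1−ρ) ‖Q − Q'‖_sp`. -/
theorem bellman_span_contraction
    {S A : Type*} [Fintype S] [Fintype A] [Nonempty S] [Nonempty A]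
    (c : S → A → ℝ) (p : S → A → S → ℝ) (ρ : ℝ) (hρ : 0 < ρ)
    (hp : ∀ s a s', ρ ≤ p s a s') (hp1 : ∀ s a, ∑ s', p s a s' = 1)
    (Q Q' : S → A → ℝ) :
    spanSN (fun sa : S × A =>
        bellmanT c p Q sa.1 sa.2 - bellmanT c p Q' sa.1 sa.2)
      ≤ (1 - ρ) * spanSN (fun s : S => (⨅ a', Q s a') - ⨅ a', Q' s a') ∧
    (1 - ρ) * spanSN (fun s : S => (⨅ a', Q s a') - ⨅ a', Q' s a')
      ≤ (1 - ρ) * spanSN (fun sa : S × A => Q sa.1 sa.2 - Q' sa.1 sa.2) := by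
  classical
  set g : S → ℝ := fun s => (⨅ a', Q s a') - ⨅ a', Q' s a' with hg
  set M : ℝ := ⨆ s, g s with hM
  set m : ℝ := ⨅ s, g s with hm
  have hpos : ∀ s a s', 0 ≤ p s a s' := fun s a s' => le_trans hρ.le (hp s a s')
  have hgle : ∀ s, g s ≤ M := fun s => le_ciSup (Finite.bddAbove_range g) s
  have hgge : ∀ s, m ≤ g s := fun s => ciInf_le (Finite.bddBelow_range g) s
  have hmM : m ≤ M := le_trans (hgge (Classical.arbitrary S)) (hgle _)
  -- ρ ≤ 1
  have hρ1 : ρ ≤ 1 := by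
    obtain s := Classical.arbitrary S
    obtain a := Classical.arbitrary A
    have h1 : (Fintype.card S : ℝ) * ρ ≤ 1 := by
      rw [← hp1 s a]
      calc (Fintype.card S : ℝ) * ρ = ∑ _s' : S, ρ := by
            rw [Finset.sum_const, nsmul_eq_mul]; rfl
        _ ≤ ∑ s', p s a s' := Finset.sum_le_sum fun s' _ => hp s a s'
    have hc : (1 : ℝ) ≤ (Fintype.card S : ℝ) := by
      exact_mod_cast Fintype.card_pos
    nlinarith
  -- difference formula
  have hdiff : ∀ s a, bellmanT c p Q s a - bellmanT c p Q' s a = ∑ s', p s a s' * g s' := by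
    intro s a
    have h : (∑ s', p s a s' * ⨅ a', Q s' a') - (∑ s', p s a s' * ⨅ a', Q' s' a')
        = ∑ s', p s a s' * g s' := by
      rw [← Finset.sum_sub_distrib]
      exact Finset.sum_congr rfl fun s' _ => by simp only [hg]; ring
    simp only [bellmanT]
    linarith
  -- upper bound
  have hub : ∀ s a, ∑ s', p s a s' * g s' ≤ m + (1 - ρ) * (M - m) := by
    intro s a
    obtain ⟨s₀, hs₀⟩ := inf_attained g
    have hsum : p s a s₀ + ∑ s' ∈ Finset.univ.erase s₀, p s a s' = 1 := by
      rw [Finset.add_sum_erase _ _ (Finset.mem_univ s₀)]; exact hp1 s a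
    have hsplit : ∑ s', p s a s' * g s'
        = p s a s₀ * g s₀ + ∑ s' ∈ Finset.univ.erase s₀, p s a s' * g s' :=
      (Finset.add_sum_erase _ _ (Finset.mem_univ s₀)).symm
    have h1 : ∑ s' ∈ Finset.univ.erase s₀, p s a s' * g s'
        ≤ ∑ s' ∈ Finset.univ.erase s₀, p s a s' * M :=
      Finset.sum_le_sum fun s' _ => mul_le_mul_of_nonneg_left (hgle s') (hpos s a s')
    have h2 : ∑ s' ∈ Finset.univ.erase s₀, p s a s' * M
        = (1 - p s a s₀) * M := by
      have he : ∑ s' ∈ Finset.univ.erase s₀, p s a s' = 1 - p s a s₀ := by linarith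
      rw [← Finset.sum_mul, he]
    have hp0 : ρ ≤ p s a s₀ := hp s a s₀
    rw [hsplit, hs₀]
    rw [← hm] at *
    nlinarith [hmM]
  -- lower bound
  have hlb : ∀ s a, m ≤ ∑ s', p s a s' * g s' := by
    intro s a
    calc m = ∑ s', p s a s' * m := by rw [← Finset.sum_mul, hp1, one_mul]
      _ ≤ ∑ s', p s a s' * g s' :=
        Finset.sum_le_sum fun s' _ => mul_le_mul_of_nonneg_left (hgge s') (hpos s a s')
  constructor
  · show ((⨆ sa : S × A, (bellmanT c p Q sa.1 sa.2 - bellmanT c p Q' sa.1 sa.2))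
      - ⨅ sa : S × A, (bellmanT c p Q sa.1 sa.2 - bellmanT c p Q' sa.1 sa.2))
      ≤ (1 - ρ) * (M - m)
    have hsup : (⨆ sa : S × A, (bellmanT c p Q sa.1 sa.2 - bellmanT c p Q' sa.1 sa.2))
        ≤ m + (1 - ρ) * (M - m) :=
      ciSup_le fun sa => by rw [hdiff sa.1 sa.2]; exact hub sa.1 sa.2
    have hinf : m ≤ ⨅ sa : S × A, (bellmanT c p Q sa.1 sa.2 - bellmanT c p Q' sa.1 sa.2) :=
      le_ciInf fun sa => by rw [hdiff sa.1 sa.2]; exact hlb sa.1 sa.2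
    linarith
  · have h1ρ : (0:ℝ) ≤ 1 - ρ := by linarith
    have hMd : M ≤ ⨆ sa : S × A, (Q sa.1 sa.2 - Q' sa.1 sa.2) := by
      apply ciSup_le
      intro s
      obtain ⟨a₀, ha₀⟩ := inf_attained (Q' s)
      calc g s ≤ Q s a₀ - Q' s a₀ := by
            have : (⨅ a', Q s a') ≤ Q s a₀ := ciInf_le (Finite.bddBelow_range _) a₀
            simp only [hg]; linarith [ha₀]
        _ ≤ ⨆ sa : S × A, (Q sa.1 sa.2 - Q' sa.1 sa.2) :=
            le_ciSup (Finite.bddAbove_range fun sa : S × A => Q sa.1 sa.2 - Q' sa.1 sa.2) (s, a₀)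
    have hmd : (⨅ sa : S × A, (Q sa.1 sa.2 - Q' sa.1 sa.2)) ≤ m := by
      apply le_ciInf
      intro s
      obtain ⟨a₁, ha₁⟩ := inf_attained (Q s)
      calc (⨅ sa : S × A, (Q sa.1 sa.2 - Q' sa.1 sa.2)) ≤ Q s a₁ - Q' s a₁ :=
            ciInf_le (Finite.bddBelow_range _) (s, a₁)
        _ ≤ g s := by
            have : (⨅ a', Q' s a') ≤ Q' s a₁ := ciInf_le (Finite.bddBelow_range _) a₁
            simp only [hg]; linarith [ha₁]
    show (1 - ρ) * (M - m)
      ≤ (1 - ρ) * ((⨆ sa : S × A, (Q sa.1 sa.2 - Q' sa.1 sa.2))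
        - ⨅ sa : S × A, (Q sa.1 sa.2 - Q' sa.1 sa.2))
    nlinarith
end
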